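/- arXiv:math/9310214 — 2 statements merged into one kernel-verified Lean document; each statement's English description precedes it below -/
import Mathlib

section
/- Let $X_1, X_2, \dots$ be independent identically distributed random variables with values in a Banach space, with partial sums $S_j = \sum_{i=1}^j X_i$. Let $1 \le j \le k$ and $t > 0$. If $\Pr(\|S_{k-j}\| > 9t/10) \le 1/3$, then $\Pr(\|S_j\| > t) \le \frac{3}{2}\, \Pr(\|S_k\| > t/10)$. -/
open MeasureTheory ProbabilityTheory
open scoped ENNReal

/-!
Write `S_k = S_j + T` with `T = X_j + ⋯ + X_{k-1}`. The increment `T` is independent of `S_j` and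
distributed as `S_{k-j}`, so with probability at least `2/3` it has norm at most `9t/10`,
independently of the event `‖S_j‖ > t`. On both events `‖S_k‖ > t/10`, hence
`(2/3) P(‖S_j‖ > t) ≤ P(‖S_k‖ > t/10)`.
-/

namespace ProbabilityTheory

variable {α β M : Type*} [MeasurableSpace α] [MeasurableSpace β] [MeasurableSpace M]
  {μ : Measure α} {ν : Measure β}

theorem IdentDistrib.add [AddMonoid M] [MeasurableAdd₂ M] [IsFiniteMeasure μ] [IsFiniteMeasure ν]
    {f g : α → M} {f' g' : β → M} (hf : IdentDistrib f f' μ ν) (hg : IdentDistrib g g' μ ν)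
    (hfg : IndepFun f g μ) (hfg' : IndepFun f' g' ν) :
    IdentDistrib (f + g) (f' + g') μ ν where
  aemeasurable_fst := hf.aemeasurable_fst.add hg.aemeasurable_fst
  aemeasurable_snd := hf.aemeasurable_snd.add hg.aemeasurable_snd
  map_eq := by
    rw [hfg.map_add_eq_map_conv_map₀ hf.aemeasurable_fst hg.aemeasurable_fst,
      hfg'.map_add_eq_map_conv_map₀ hf.aemeasurable_snd hg.aemeasurable_snd, hf.map_eq, hg.map_eq]

theorem IdentDistrib.sum_range [AddCommMonoid M] [MeasurableAdd₂ M] {X : ℕ → α → M}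
    {Y : ℕ → β → M} (hXY : ∀ i, IdentDistrib (X i) (Y i) μ ν) (hX : iIndepFun X μ)
    (hY : iIndepFun Y ν) (n : ℕ) :
    IdentDistrib (∑ i ∈ Finset.range n, X i) (∑ i ∈ Finset.range n, Y i) μ ν := by
  have := hX.isProbabilityMeasure
  have := hY.isProbabilityMeasure
  induction n with
  | zero =>
    refine ⟨aemeasurable_const, aemeasurable_const, ?_⟩
    simp only [Finset.sum_range_zero, Pi.zero_def, Measure.map_const, measure_univ]
  | succ n ih =>
    simp only [Finset.sum_range_succ]
    exact ih.add (hXY n)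
      (hX.indepFun_sum_range_succ₀ (fun i ↦ (hXY i).aemeasurable_fst) n)
      (hY.indepFun_sum_range_succ₀ (fun i ↦ (hXY i).aemeasurable_snd) n)

theorem identDistrib_sum_Ico_sum_range [AddCommMonoid M] [MeasurableAdd₂ M] {X : ℕ → α → M}
    (hX : iIndepFun X μ) (hident : ∀ i, IdentDistrib (X i) (X 0) μ μ) (j k : ℕ) :
    IdentDistrib (∑ i ∈ Finset.Ico j k, X i) (∑ i ∈ Finset.range (k - j), X i) μ μ := by
  rw [Finset.sum_Ico_eq_sum_range]
  exact IdentDistrib.sum_range (fun i ↦ (hident _).trans (hident i).symm)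
    (hX.precomp (add_right_injective j)) hX _

theorem iIndepFun.indepFun_finsetSum_finsetSum₀ {ι : Type*} [AddCommMonoid M] [MeasurableAdd₂ M]
    {X : ι → α → M} (hX : iIndepFun X μ) (hmeas : ∀ i, AEMeasurable (X i) μ) {S T : Finset ι}
    (hST : Disjoint S T) :
    IndepFun (∑ i ∈ S, X i) (∑ i ∈ T, X i) μ := by
  have hsum (U : Finset ι) :
      ∑ i ∈ U, X i = (fun x : U → M ↦ ∑ i, x i) ∘ fun a (i : U) ↦ X i a := by
    ext a
    simp only [Finset.sum_apply, Function.comp_apply, Finset.sum_coe_sort U (X · a)]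
  rw [hsum S, hsum T]
  exact (hX.indepFun_finset₀ S T hST hmeas).comp
    (Finset.measurable_sum _ fun i _ ↦ measurable_pi_apply i)
    (Finset.measurable_sum _ fun i _ ↦ measurable_pi_apply i)

section Norm

variable {E : Type*} [SeminormedAddCommGroup E] [MeasurableSpace E] [OpensMeasurableSpace E]
  {Y Z : α → E}

theorem IndepFun.measure_lt_norm_mul_measure_norm_le (hYZ : IndepFun Y Z μ) (s u : ℝ) :
    μ {a | s < ‖Y a‖} * μ {a | ‖Z a‖ ≤ u} ≤ μ {a | s - u < ‖(Y + Z) a‖} := by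
  change μ (Y ⁻¹' {y | s < ‖y‖}) * μ (Z ⁻¹' {z | ‖z‖ ≤ u}) ≤ _
  rw [← hYZ.measure_inter_preimage_eq_mul _ _
    (measurableSet_lt measurable_const continuous_norm.measurable)
    (measurableSet_le continuous_norm.measurable measurable_const)]
  refine measure_mono fun a ⟨hYa, hZa⟩ ↦ ?_
  simp only [Set.mem_preimage, Set.mem_ofPred_eq, Pi.add_apply] at hYa hZa ⊢
  linarith [norm_sub_le_norm_add (Y a) (Z a)]

theorem IndepFun.measure_lt_norm_le_three_halves_mul [IsProbabilityMeasure μ]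
    (hYZ : IndepFun Y Z μ) (hZ : AEMeasurable Z μ) {s u : ℝ}
    (hZ_large : μ {a | u < ‖Z a‖} ≤ 1 / 3) :
    μ {a | s < ‖Y a‖} ≤ 3 / 2 * μ {a | s - u < ‖(Y + Z) a‖} := by
  have hZ_small : 2 / 3 ≤ μ {a | ‖Z a‖ ≤ u} := by
    have hcompl : {a | ‖Z a‖ ≤ u} = {a | u < ‖Z a‖}ᶜ := by
      simp only [Set.compl_ofPred, not_lt]
    have hnull : NullMeasurableSet {a | u < ‖Z a‖} μ :=
      hZ.nullMeasurableSet_preimage (measurableSet_lt measurable_const continuous_norm.measurable)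
    rw [hcompl, prob_compl_eq_one_sub₀ hnull]
    calc (2 : ℝ≥0∞) / 3 ≤ 1 - 1 / 3 := by
          refine ENNReal.le_sub_of_add_le_right (by norm_num) ?_
          rw [ENNReal.div_add_div_same, two_add_one_eq_three, ENNReal.div_self] <;> norm_num
      _ ≤ 1 - μ {a | u < ‖Z a‖} := by gcongr
  calc μ {a | s < ‖Y a‖}
      = 3 / 2 * (2 / 3) * μ {a | s < ‖Y a‖} := by
        rw [← mul_div_assoc, ENNReal.div_mul_cancel, ENNReal.div_self, one_mul] <;> norm_num
    _ ≤ 3 / 2 * (μ {a | s < ‖Y a‖} * μ {a | ‖Z a‖ ≤ u}) := by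
        rw [mul_assoc, mul_comm (2 / 3)]
        gcongr
    _ ≤ 3 / 2 * μ {a | s - u < ‖(Y + Z) a‖} := by
        gcongr
        exact hYZ.measure_lt_norm_mul_measure_norm_le s u

end Norm

end ProbabilityTheory

theorem sums_iid_comparison_first_case_general
    {Ω : Type*} [MeasurableSpace Ω] {P : Measure Ω} [IsProbabilityMeasure P]
    {E : Type*} [NormedAddCommGroup E]
    [MeasurableSpace E] [BorelSpace E] [SecondCountableTopology E]
    (X : ℕ → Ω → E)
    (hindep : iIndepFun X P)
    (hident : ∀ i, IdentDistrib (X i) (X 0) P P)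
    {j k : ℕ} (hjk : j ≤ k) {t : ℝ}
    (hcase : P {ω | 9 * t / 10 < ‖∑ i ∈ Finset.range (k - j), X i ω‖} ≤ (1 : ℝ≥0∞) / 3) :
    P {ω | t < ‖∑ i ∈ Finset.range j, X i ω‖} ≤
      (3 : ℝ≥0∞) / 2 * P {ω | t / 10 < ‖∑ i ∈ Finset.range k, X i ω‖} := by
  simp only [← Finset.sum_apply] at hcase ⊢
  have hT := identDistrib_sum_Ico_sum_range hindep hident j k
  have hindepT : IndepFun (∑ i ∈ Finset.range j, X i) (∑ i ∈ Finset.Ico j k, X i) P :=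
    hindep.indepFun_finsetSum_finsetSum₀ (fun i ↦ (hident i).aemeasurable_fst)
      (Finset.range_eq_Ico j ▸ Finset.Ico_disjoint_Ico_consecutive 0 j k)
  have key := hindepT.measure_lt_norm_le_three_halves_mul (s := t) hT.aemeasurable_fst
    ((hT.measure_mem_eq (measurableSet_lt measurable_const measurable_norm)).trans_le hcase)
  rwa [show t - 9 * t / 10 = t / 10 by ring, Finset.sum_range_add_sum_Ico X hjk] at key

/-- First case in the proof of Theorem 1: for i.i.d. Banach-space valued random variables
with partial sums `S_j`, if `1 ≤ j ≤ k`, `t > 0` and `P(‖S_{k-j}‖ > 9t/10) ≤ 1/3`, then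
`P(‖S_j‖ > t) ≤ (3/2) P(‖S_k‖ > t/10)`. -/
theorem sums_iid_comparison_first_case
    {Ω : Type*} [MeasurableSpace Ω] {P : Measure Ω} [IsProbabilityMeasure P]
    {E : Type*} [NormedAddCommGroup E] [NormedSpace ℝ E] [CompleteSpace E]
    [MeasurableSpace E] [BorelSpace E] [SecondCountableTopology E]
    (X : ℕ → Ω → E) (hmeas : ∀ i, Measurable (X i))
    (hindep : iIndepFun X P)
    (hident : ∀ i, IdentDistrib (X i) (X 0) P P)
    {j k : ℕ} (hj : 1 ≤ j) (hjk : j ≤ k) {t : ℝ} (ht : 0 < t)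
    (hcase : P {ω | 9 * t / 10 < ‖∑ i ∈ Finset.range (k - j), X i ω‖} ≤ (1 : ℝ≥0∞) / 3) :
    P {ω | t < ‖∑ i ∈ Finset.range j, X i ω‖} ≤
      (3 : ℝ≥0∞) / 2 * P {ω | t / 10 < ‖∑ i ∈ Finset.range k, X i ω‖} :=
  sums_iid_comparison_first_case_general X hindep hident hjk hcase
end

section
/- Let $X_1, X_2, \dots$ be independent identically distributed random variables with values in a Banach space, with partial sums $S_i = \sum_{l=1}^i X_l$. Let $1 \le j < k$ and $t > 0$. Suppose that $\Pr(\|S_{k-j}\| > 9t/10) > 1/3$ and that for every $1 \le i \le k$ the partial sum $S_i$ has a $(t/10)$-concentration point $s_i$. Then $\|s_k\| \ge t/5$ and $\Pr(\|S_k\| \ge t/10) \ge 2/3$. -/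
/-!
The event `‖S_{k-j}‖ > 9t/10` has probability above `1/3`, so it meets the concentration event
of `S_{k-j}`, whence `‖s_{k-j}‖ > 4t/5`. Concentration points are approximately additive:
`S_{a+b} = S_a + S'`, where `S'` is independent of `S_a` and distributed as `S_b`, and three
events of probability above `2/3`, two of them independent, must intersect; this gives
`‖s_{a+b} - s_a - s_b‖ ≤ 3t/10`. Running Euclid's algorithm on `(k, k - j)` then yields
`‖(k - j) • s_k - k • s_{k-j}‖ ≤ (2k - j - 2) · 3t/10`, which forces `‖s_k‖ ≥ t/5`.
Finally `S_k` lies within `t/10` of `s_k` with probability above `2/3`.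
-/

open MeasureTheory ProbabilityTheory Finset
open scoped ENNReal

def IsConcentrationPoint {Ω E : Type*} [MeasurableSpace Ω] [SeminormedAddCommGroup E]
    (P : Measure Ω) (Y : Ω → E) (r : ℝ) (x : E) : Prop :=
  2 / 3 < P {ω | ‖Y ω - x‖ ≤ r}

theorem measurableSet_norm_sub_le {E : Type*} [NormedAddCommGroup E] [MeasurableSpace E]
    [OpensMeasurableSpace E] (x : E) (r : ℝ) : MeasurableSet {y : E | ‖y - x‖ ≤ r} :=
  measurableSet_le (by fun_prop : Continuous fun y => ‖y - x‖).measurable measurable_const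

namespace IsConcentrationPoint

variable {Ω E : Type*} [MeasurableSpace Ω] {P : Measure Ω} [NormedAddCommGroup E]
  {Y Z : Ω → E} {r ρ : ℝ} {x y z : E}

theorem measure_le_norm (hx : IsConcentrationPoint P Y r x) (h : ρ + r ≤ ‖x‖) :
    2 / 3 ≤ P {ω | ρ ≤ ‖Y ω‖} := by
  refine hx.le.trans (measure_mono fun ω (hω : ‖Y ω - x‖ ≤ r) => ?_)
  show ρ ≤ ‖Y ω‖
  linarith [norm_le_norm_add_norm_sub (Y ω) x]

variable [MeasurableSpace E] [OpensMeasurableSpace E]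

theorem lt_norm_add [IsProbabilityMeasure P]
    (hx : IsConcentrationPoint P Y r x) (hY : Measurable Y)
    (h : 1 / 3 < P {ω | ρ < ‖Y ω‖}) : ρ < ‖x‖ + r := by
  have htotal : P Set.univ < P {ω | ‖Y ω - x‖ ≤ r} + P {ω | ρ < ‖Y ω‖} := by
    calc P Set.univ = 2 / 3 + 1 / 3 := by
          rw [measure_univ, ENNReal.div_add_div_same]; norm_num
          exact (ENNReal.div_self (by norm_num) (by norm_num)).symm
      _ < _ := ENNReal.add_lt_add hx h
  obtain ⟨ω, hω : ‖Y ω - x‖ ≤ r, hρ : ρ < ‖Y ω‖⟩ := nonempty_inter_of_measure_lt_add' P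
    (hY (measurableSet_norm_sub_le x r)) (Set.subset_univ _) (Set.subset_univ _) htotal
  linarith [norm_le_norm_add_norm_sub' (Y ω) x]

theorem of_identDistrib {Ω' : Type*} [MeasurableSpace Ω']
    {P' : Measure Ω'} {Y' : Ω' → E} (hx : IsConcentrationPoint P' Y' r x)
    (hY : IdentDistrib Y Y' P P') : IsConcentrationPoint P Y r x :=
  hx.trans_eq (hY.measure_mem_eq (measurableSet_norm_sub_le x r)).symm

/-- Three events of probability above `2/3`, two of them independent, must intersect,
since `2/3 + (2/3)^2 > 1`. -/
theorem norm_sub_sub_le [IsProbabilityMeasure P]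
    (hY : Measurable Y) (hZ : Measurable Z) (hYZ : IndepFun Y Z P)
    (hx : IsConcentrationPoint P Y r x) (hy : IsConcentrationPoint P Z r y)
    (hz : IsConcentrationPoint P (fun ω => Y ω + Z ω) r z) : ‖z - x - y‖ ≤ 3 * r := by
  have hinter : P ({ω | ‖Y ω - x‖ ≤ r} ∩ {ω | ‖Z ω - y‖ ≤ r}) = _ :=
    hYZ.measure_inter_preimage_eq_mul _ _ (measurableSet_norm_sub_le x r)
      (measurableSet_norm_sub_le y r)
  have htotal : P Set.univ
      < P {ω | ‖Y ω + Z ω - z‖ ≤ r} + P ({ω | ‖Y ω - x‖ ≤ r} ∩ {ω | ‖Z ω - y‖ ≤ r}) := by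
    calc P Set.univ < 2 / 3 + 2 / 3 * (2 / 3) := by
          rw [measure_univ, ← ENNReal.toReal_lt_toReal (by simp) (by finiteness),
            ENNReal.toReal_add (by finiteness) (by finiteness), ENNReal.toReal_mul]
          simp only [ENNReal.toReal_div]
          norm_num
      _ < _ := ENNReal.add_lt_add hz (hinter ▸ ENNReal.mul_lt_mul hx hy)
  obtain ⟨ω, hω : ‖Y ω + Z ω - z‖ ≤ r, hωY : ‖Y ω - x‖ ≤ r, hωZ : ‖Z ω - y‖ ≤ r⟩ :=
    nonempty_inter_of_measure_lt_add P
      ((hY (measurableSet_norm_sub_le x r)).inter (hZ (measurableSet_norm_sub_le y r)))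
      (Set.subset_univ _) (Set.subset_univ _) htotal
  have hsplit : z - x - y = -(Y ω + Z ω - z) + (Y ω - x) + (Z ω - y) := by abel
  calc ‖z - x - y‖ ≤ ‖Y ω + Z ω - z‖ + ‖Y ω - x‖ + ‖Z ω - y‖ := by
        rw [hsplit, ← norm_neg (Y ω + Z ω - z)]
        exact norm_add₃_le
    _ ≤ 3 * r := by linarith

end IsConcentrationPoint

section IndepBlocks

variable {Ω E : Type*} [MeasurableSpace Ω] {P : Measure Ω} [AddCommMonoid E] [MeasurableSpace E]
  [MeasurableAdd₂ E]

theorem ProbabilityTheory.iIndepFun.indepFun_finsetSum_finsetSum {ι : Type*} {X : ι → Ω → E}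
    (hX : iIndepFun X P) (hmeas : ∀ i, Measurable (X i)) {S T : Finset ι} (hST : Disjoint S T) :
    IndepFun (fun ω => ∑ i ∈ S, X i ω) (fun ω => ∑ i ∈ T, X i ω) P := by
  have hsum (U : Finset ι) : Measurable fun v : U → E => ∑ i, v i :=
    Finset.measurable_sum _ fun i _ => measurable_pi_apply i
  convert (hX.indepFun_finset S T hST hmeas).comp (hsum S) (hsum T) using 1 <;>
    exact funext fun ω => (sum_coe_sort _ fun i => X i ω).symm

theorem identDistrib_sum_Ico_sum_range {X : ℕ → Ω → E} (hX : iIndepFun X P)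
    (hident : ∀ i, IdentDistrib (X i) (X 0) P P) (a b : ℕ) :
    IdentDistrib (fun ω => ∑ i ∈ Ico a (a + b), X i ω) (fun ω => ∑ i ∈ range b, X i ω) P P := by
  have hshift : IdentDistrib (fun ω (i : ℕ) => X (a + i) ω) (fun ω i => X i ω) P P :=
    IdentDistrib.pi (fun i => (hident _).trans (hident i).symm)
      (hX.precomp (add_right_injective a)) hX
  simpa only [sum_Ico_eq_sum_range, Nat.add_sub_cancel_left, Function.comp_def] using
    hshift.comp (Finset.measurable_sum (range b) fun i _ => measurable_pi_apply i)

end IndepBlocks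

/-- Euclid's algorithm on `(a, b)`: the step `(a, b) ↦ (b, a - b)` costs one application of the
approximate additivity, scaled by `b`. -/
theorem norm_nsmul_sub_nsmul_le_of_norm_add_sub_le {E : Type*} [SeminormedAddCommGroup E]
    {s : ℕ → E} {δ : ℝ} (hδ : 0 ≤ δ) {k : ℕ}
    (hadd : ∀ a b, 1 ≤ a → 1 ≤ b → a + b ≤ k → ‖s (a + b) - s a - s b‖ ≤ δ)
    {a b : ℕ} (ha : 1 ≤ a) (hb : 1 ≤ b) (hak : a ≤ k) (hbk : b ≤ k) :
    ‖b • s a - a • s b‖ ≤ ((a : ℝ) + b - 2) * δ := by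
  induction hn : a + b using Nat.strong_induction_on generalizing a b with
  | _ n ih =>
  wlog hba : b ≤ a generalizing a b
  · rw [norm_sub_rev, add_comm (a : ℝ)]
    exact this hb ha hbk hak (by omega) (by omega)
  obtain rfl | hlt := hba.eq_or_lt
  · simp only [sub_self, norm_zero]
    have : (1 : ℝ) ≤ b := by exact_mod_cast hb
    nlinarith
  obtain ⟨c, rfl⟩ : ∃ c, a = b + c := ⟨a - b, by omega⟩
  have hc : 1 ≤ c := by omega
  have hrec : ‖b • s c - c • s b‖ ≤ ((b : ℝ) + c - 2) * δ := by
    rw [add_comm (b : ℝ)]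
    exact ih (c + b) (by omega) hc hb (by omega) hbk rfl
  have hstep : b • s (b + c) - (b + c) • s b
      = b • (s (b + c) - s b - s c) + (b • s c - c • s b) := by
    simp only [add_nsmul, smul_sub]; abel
  calc ‖b • s (b + c) - (b + c) • s b‖
      ≤ ‖b • (s (b + c) - s b - s c)‖ + ‖b • s c - c • s b‖ := hstep ▸ norm_add_le _ _
    _ ≤ b * δ + ((b : ℝ) + c - 2) * δ := by
        gcongr
        exact norm_nsmul_le.trans (by gcongr; exact hadd b c hb hc hak)
    _ = (((b + c : ℕ) : ℝ) + b - 2) * δ := by push_cast; ring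

theorem norm_sub_sub_le_of_isConcentrationPoint_sum_range {Ω E : Type*} [MeasurableSpace Ω]
    {P : Measure Ω} [IsProbabilityMeasure P] [NormedAddCommGroup E] [MeasurableSpace E]
    [OpensMeasurableSpace E] [MeasurableAdd₂ E] {X : ℕ → Ω → E} (hmeas : ∀ i, Measurable (X i))
    (hX : iIndepFun X P) (hident : ∀ i, IdentDistrib (X i) (X 0) P P) {a b : ℕ} {r : ℝ}
    {x y z : E} (hx : IsConcentrationPoint P (fun ω => ∑ l ∈ range a, X l ω) r x)
    (hy : IsConcentrationPoint P (fun ω => ∑ l ∈ range b, X l ω) r y)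
    (hz : IsConcentrationPoint P (fun ω => ∑ l ∈ range (a + b), X l ω) r z) :
    ‖z - x - y‖ ≤ 3 * r := by
  have hsum (S : Finset ℕ) : Measurable fun ω => ∑ l ∈ S, X l ω :=
    Finset.measurable_sum S fun l _ => hmeas l
  have hindep :
      IndepFun (fun ω => ∑ l ∈ range a, X l ω) (fun ω => ∑ l ∈ Ico a (a + b), X l ω) P :=
    hX.indepFun_finsetSum_finsetSum hmeas <| by
      rw [range_eq_Ico]; exact Ico_disjoint_Ico_consecutive 0 a (a + b)
  simp only [← sum_range_add_sum_Ico _ (Nat.le_add_right a b)] at hz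
  exact IsConcentrationPoint.norm_sub_sub_le (hsum _) (hsum _) hindep hx
    (hy.of_identDistrib (identDistrib_sum_Ico_sum_range hX hident a b)) hz

theorem mul_norm_le_of_norm_add_sub_le {E : Type*} [NormedAddCommGroup E] [NormedSpace ℝ E]
    {s : ℕ → E} {δ : ℝ} (hδ : 0 ≤ δ) {k : ℕ}
    (hadd : ∀ a b, 1 ≤ a → 1 ≤ b → a + b ≤ k → ‖s (a + b) - s a - s b‖ ≤ δ)
    {m : ℕ} (hm : 1 ≤ m) (hmk : m ≤ k) :
    k * ‖s m‖ ≤ m * ‖s k‖ + ((k : ℝ) + m - 2) * δ := by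
  have h := norm_le_norm_add_norm_sub (m • s k) (k • s m)
  rw [RCLike.norm_nsmul ℝ, RCLike.norm_nsmul ℝ, nsmul_eq_mul, nsmul_eq_mul] at h
  linarith [norm_nsmul_sub_nsmul_le_of_norm_add_sub_le hδ hadd (hm.trans hmk) hm le_rfl hmk]

theorem sums_iid_comparison_third_case_general
    {Ω : Type*} [MeasurableSpace Ω] {P : Measure Ω} [IsProbabilityMeasure P]
    {E : Type*} [NormedAddCommGroup E] [NormedSpace ℝ E]
    [MeasurableSpace E] [BorelSpace E] [SecondCountableTopology E]
    (X : ℕ → Ω → E) (hmeas : ∀ i, Measurable (X i))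
    (hindep : iIndepFun X P)
    (hident : ∀ i, IdentDistrib (X i) (X 0) P P)
    {j k : ℕ} (hjk : j < k) {t : ℝ} (ht : 0 < t)
    (hcase : (1 : ℝ≥0∞) / 3 < P {ω | 9 * t / 10 < ‖∑ l ∈ Finset.range (k - j), X l ω‖})
    (s : ℕ → E)
    (hconc : ∀ i, 1 ≤ i → i ≤ k →
      (2 : ℝ≥0∞) / 3 < P {ω | ‖(∑ l ∈ Finset.range i, X l ω) - s i‖ ≤ t / 10}) :
    t / 5 ≤ ‖s k‖ ∧
      (2 : ℝ≥0∞) / 3 ≤ P {ω | t / 10 ≤ ‖∑ l ∈ Finset.range k, X l ω‖} := by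
  have hpt : ∀ i, 1 ≤ i → i ≤ k →
      IsConcentrationPoint P (fun ω => ∑ l ∈ range i, X l ω) (t / 10) (s i) := hconc
  set m := k - j
  have hm : 1 ≤ m := by omega
  have hsm : 9 * t / 10 < ‖s m‖ + t / 10 :=
    (hpt m hm (Nat.sub_le k j)).lt_norm_add (Finset.measurable_sum _ fun l _ => hmeas l) hcase
  have hadd (a b : ℕ) (ha : 1 ≤ a) (hb : 1 ≤ b) (hab : a + b ≤ k) :
      ‖s (a + b) - s a - s b‖ ≤ 3 * (t / 10) :=
    norm_sub_sub_le_of_isConcentrationPoint_sum_range hmeas hindep hident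
      (hpt a ha (by omega)) (hpt b hb (by omega)) (hpt (a + b) (by omega) hab)
  have hcomp := mul_norm_le_of_norm_add_sub_le (by positivity) hadd hm (Nat.sub_le k j)
  have hmk : (m : ℝ) ≤ k := by exact_mod_cast Nat.sub_le k j
  have hsk : t / 5 ≤ ‖s k‖ := by
    by_contra! hlt
    nlinarith [mul_le_mul_of_nonneg_left hlt.le (Nat.cast_nonneg m)]
  exact ⟨hsk, (hpt k (by omega) le_rfl).measure_le_norm (by linarith)⟩

/-- Third case in the proof of Theorem 1: for i.i.d. Banach-space valued random variables
with partial sums `S_i`, if `1 ≤ j < k`, `P(‖S_{k-j}‖ > 9t/10) > 1/3`, and every `S_i`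
with `1 ≤ i ≤ k` has a `(t/10)`-concentration point `s_i`, then `‖s_k‖ ≥ t/5` and
`P(‖S_k‖ ≥ t/10) ≥ 2/3`. -/
theorem sums_iid_comparison_third_case
    {Ω : Type*} [MeasurableSpace Ω] {P : Measure Ω} [IsProbabilityMeasure P]
    {E : Type*} [NormedAddCommGroup E] [NormedSpace ℝ E] [CompleteSpace E]
    [MeasurableSpace E] [BorelSpace E] [SecondCountableTopology E]
    (X : ℕ → Ω → E) (hmeas : ∀ i, Measurable (X i))
    (hindep : iIndepFun X P)
    (hident : ∀ i, IdentDistrib (X i) (X 0) P P)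
    {j k : ℕ} (hj : 1 ≤ j) (hjk : j < k) {t : ℝ} (ht : 0 < t)
    (hcase : (1 : ℝ≥0∞) / 3 < P {ω | 9 * t / 10 < ‖∑ l ∈ Finset.range (k - j), X l ω‖})
    (s : ℕ → E)
    (hconc : ∀ i, 1 ≤ i → i ≤ k →
      (2 : ℝ≥0∞) / 3 < P {ω | ‖(∑ l ∈ Finset.range i, X l ω) - s i‖ ≤ t / 10}) :
    t / 5 ≤ ‖s k‖ ∧
      (2 : ℝ≥0∞) / 3 ≤ P {ω | t / 10 ≤ ‖∑ l ∈ Finset.range k, X l ω‖} :=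
  sums_iid_comparison_third_case_general X hmeas hindep hident hjk ht hcase s hconc
end
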